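/- arXiv:0802.0023 — 3 statements merged into one kernel-verified Lean document; each statement's English description precedes it below -/
import Mathlib

section
/- Let σ_{k,l}, k ∈ ℕ₀, l = 1,…,a_k, be non-negative moment measures with support in [0,∞). Then the functional T : ℂ[x_1,…,x_d] → ℂ defined by T(f) := Σ_{k=0}^{deg f} Σ_{l=1}^{a_k} ∫_0^∞ f_{k,l}(r) r^{-k} dσ_{k,l}(r), where f_{k,l} are the Laplace–Fourier coefficients of f, is pseudo-positive definite. -/
open MeasureTheory MvPolynomial Metric
open scoped ComplexOrder ENNReal

noncomputable section

/-- `d`-dimensional Euclidean space. -/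
abbrev E (d : ℕ) := EuclideanSpace ℝ (Fin d)

/-- The (surface) measure `dθ` on the unit sphere `S^{d-1}`. -/
noncomputable def sphMeas (d : ℕ) : Measure (sphere (0 : E d) 1) :=
  (volume : Measure (E d)).toSphere

/-- A bundled orthonormal basis `Y_{k,l}`, `l = 1,…,a_k`, of the spaces `H_k(ℝ^d)` of
real-valued harmonic polynomials homogeneous of degree `k`, orthonormal with respect to
`⟨f,g⟩ = ∫_{S^{d-1}} f g dθ`. -/
structure HarmonicBasis (d : ℕ) where
  a : ℕ → ℕ
  Y : (k : ℕ) → Fin (a k) → MvPolynomial (Fin d) ℝ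
  harmonic : ∀ k l, (∑ i, pderiv i (pderiv i (Y k l))) = 0
  homogeneous : ∀ k l, (Y k l).IsHomogeneous k
  orthonormal : ∀ (k k' : ℕ) (l : Fin (a k)) (l' : Fin (a k')),
    (∫ θ : sphere (0 : E d) 1,
        (eval (fun i => (θ : E d) i) (Y k l)) * (eval (fun i => (θ : E d) i) (Y k' l'))
      ∂(sphMeas d)) = if k = k' ∧ (l : ℕ) = (l' : ℕ) then 1 else 0
  complete : ∀ (k : ℕ) (P : MvPolynomial (Fin d) ℝ),
    (∑ i, pderiv i (pderiv i P)) = 0 → P.IsHomogeneous k →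
      P ∈ Submodule.span ℝ (Set.range (Y k))

/-- Evaluation of a complex polynomial in `d` variables at a point of `ℝ^d`. -/
def evalC {d : ℕ} (P : MvPolynomial (Fin d) ℂ) (x : E d) : ℂ :=
  eval (fun i => (x i : ℂ)) P

/-- The polynomial `|x|² = x₁² + … + x_d²`. -/
def normSqP (d : ℕ) : MvPolynomial (Fin d) ℂ := ∑ i, X i ^ 2

/-- Integral of a (complex- or real-valued) function with respect to a signed measure,
via the Jordan decomposition. -/
noncomputable def sInt {α : Type*} {G : Type*} [MeasurableSpace α] [NormedAddCommGroup G]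
    [NormedSpace ℝ G] (μ : SignedMeasure α) (f : α → G) : G :=
  (∫ x, f x ∂μ.toJordanDecomposition.posPart) - ∫ x, f x ∂μ.toJordanDecomposition.negPart

/-- A signed measure is a moment measure if every polynomial is integrable with respect to
its total variation. -/
def IsMomentMeasure {d : ℕ} (μ : SignedMeasure (E d)) : Prop :=
  ∀ P : MvPolynomial (Fin d) ℂ, Integrable (evalC P) μ.totalVariation

namespace HarmonicBasis

variable {d : ℕ} (B : HarmonicBasis d)

/-- `Y_{k,l}` as a function on `ℝ^d`. -/
def Yf (k : ℕ) (l : Fin (B.a k)) (x : E d) : ℝ := eval (fun i => x i) (B.Y k l)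

/-- `Y_{k,l}` as a complex polynomial. -/
def YC (k : ℕ) (l : Fin (B.a k)) : MvPolynomial (Fin d) ℂ :=
  (B.Y k l).map (algebraMap ℝ ℂ)

/-- The Laplace–Fourier coefficient `f_{k,l}(r) = ∫_{S^{d-1}} f(rθ) Y_{k,l}(θ) dθ`. -/
noncomputable def lfCoeff (f : E d → ℂ) (k : ℕ) (l : Fin (B.a k)) (r : ℝ) : ℂ :=
  ∫ θ : sphere (0 : E d) 1, f (r • (θ : E d)) * (B.Yf k l (θ : E d) : ℂ) ∂(sphMeas d)

/-- `GaussDecomp B f K p` : `p` is a Gauss (Laplace–Fourier) decomposition of the polynomial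
`f`, i.e. `f(x) = ∑_{k=0}^{K} ∑_{l=1}^{a_k} p_{k,l}(|x|²) Y_{k,l}(x)` with `p_{k,l} = 0` for
`k > K`. -/
def GaussDecomp (f : MvPolynomial (Fin d) ℂ) (K : ℕ)
    (p : (k : ℕ) → Fin (B.a k) → Polynomial ℂ) : Prop :=
  (∀ k, K < k → ∀ l, p k l = 0) ∧
    f = ∑ k ∈ Finset.range (K + 1), ∑ l,
      Polynomial.aeval (normSqP d) (p k l) * B.YC k l

/-- The component functional `T_{k,l}(p) = T(p(|x|²) Y_{k,l}(x))`. -/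
def component (T : MvPolynomial (Fin d) ℂ → ℂ) (k : ℕ) (l : Fin (B.a k))
    (p : Polynomial ℂ) : ℂ :=
  T (Polynomial.aeval (normSqP d) p * B.YC k l)

/-- A functional `T` on `ℂ[x₁,…,x_d]` is pseudo-positive definite (w.r.t. the basis `Y_{k,l}`)
if `T_{k,l}(p* p) ≥ 0` and `T_{k,l}(t · p*(t) p(t)) ≥ 0` for all univariate `p` and all `k, l`. -/
def PPD (T : MvPolynomial (Fin d) ℂ → ℂ) : Prop :=
  ∀ (k : ℕ) (l : Fin (B.a k)) (p : Polynomial ℂ),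
    0 ≤ B.component T k l (p.map (starRingEnd ℂ) * p) ∧
    0 ≤ B.component T k l (Polynomial.X * (p.map (starRingEnd ℂ) * p))

/-- A signed measure `μ` on `ℝ^d` is pseudo-positive (w.r.t. the basis `Y_{k,l}`) if
`∫ h(|x|) Y_{k,l}(x) dμ ≥ 0` for every non-negative continuous compactly supported `h`. -/
def PseudoPositive (μ : SignedMeasure (E d)) : Prop :=
  ∀ (k : ℕ) (l : Fin (B.a k)) (h : ℝ → ℝ), Continuous h → HasCompactSupport h →
    (∀ t, 0 ≤ h t) → 0 ≤ sInt μ (fun x => h ‖x‖ * B.Yf k l x)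

/-- `ν` is the family of component measures `μ_{k,l}` of the signed measure `μ`, i.e.
`∫_0^∞ h dμ_{k,l} = ∫_{ℝ^d} h(|x|) Y_{k,l}(x) dμ` for all continuous compactly supported `h`. -/
def IsComponentFamily (μ : SignedMeasure (E d))
    (ν : (k : ℕ) → Fin (B.a k) → Measure ℝ) : Prop :=
  ∀ k l, (ν k l) (Set.Iio 0) = 0 ∧
    ∀ h : ℝ → ℝ, Continuous h → HasCompactSupport h →
      ∫ t, h t ∂(ν k l) = sInt μ (fun x => h ‖x‖ * B.Yf k l x)

/-- The summability condition `C_N = ∑_{k,l} ∫_0^∞ r^N r^{-k} dσ_{k,l}(r) < ∞` for all `N`. -/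
def SummCond (σ : (k : ℕ) → Fin (B.a k) → Measure ℝ) : Prop :=
  ∀ N : ℕ, (∑' k : ℕ, ∑ l, ∫⁻ r, (ENNReal.ofReal r) ^ N * ((ENNReal.ofReal r) ^ k)⁻¹
    ∂(σ k l)) < ⊤

end HarmonicBasis

/-- The set `W_τ^{Sti}` of all non-negative moment measures on `[0,∞)` having the same
moments as `τ`. -/
def WSti (τ : Measure ℝ) : Set (Measure ℝ) :=
  {ρ | ρ (Set.Iio 0) = 0 ∧ (∀ m : ℕ, Integrable (fun t => t ^ m) ρ) ∧
    ∀ m : ℕ, ∫ t, t ^ m ∂ρ = ∫ t, t ^ m ∂τ}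

/-- A measure `ν` on `[0,∞)` is determined in the sense of Stieltjes if it is the only
non-negative measure on `[0,∞)` with its moments. -/
def StieltjesDeterminate (ν : Measure ℝ) : Prop :=
  ∀ τ : Measure ℝ, τ ∈ WSti ν → τ = ν


open Polynomial in
lemma comp_int_aux {d : ℕ} (B : HarmonicBasis d)
    (σ : (k : ℕ) → Fin (B.a k) → MeasureTheory.Measure ℝ)
    (T : MvPolynomial (Fin d) ℂ → ℂ)
    (hdef : ∀ (f : MvPolynomial (Fin d) ℂ) (K : ℕ) (p : (k : ℕ) → Fin (B.a k) → Polynomial ℂ),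
      B.GaussDecomp f K p →
      T f = ∑ k ∈ Finset.range (K + 1), ∑ l, ∫ r, (p k l).eval ((r : ℂ) ^ 2) ∂(σ k l))
    (k : ℕ) (l : Fin (B.a k)) (q : Polynomial ℂ) :
    B.component T k l q = ∫ r, q.eval ((r : ℂ) ^ 2) ∂(σ k l) := by
  classical
  set P : (k' : ℕ) → Fin (B.a k') → Polynomial ℂ :=
    fun k' l' => if k' = k ∧ (l' : ℕ) = (l : ℕ) then q else 0 with hP
  have hgd : B.GaussDecomp (Polynomial.aeval (normSqP d) q * B.YC k l) k P := by
    constructor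
    · intro k' hk' l'
      have : k' ≠ k := Nat.ne_of_gt hk'
      simp [hP, this]
    · rw [Finset.sum_eq_single_of_mem k (Finset.self_mem_range_succ k)]
      · rw [Finset.sum_eq_single_of_mem l (Finset.mem_univ l)]
        · simp [hP]
        · intro l' _ hne
          have h2 : (l' : ℕ) ≠ (l : ℕ) := fun h => hne (Fin.ext h)
          simp [hP, h2]
      · intro k' _ hne
        apply Finset.sum_eq_zero
        intro l' _
        simp [hP, hne]
  rw [HarmonicBasis.component, hdef _ k P hgd,
    Finset.sum_eq_single_of_mem k (Finset.self_mem_range_succ k)]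
  · rw [Finset.sum_eq_single_of_mem l (Finset.mem_univ l)]
    · simp [hP]
    · intro l' _ hne
      have h2 : (l' : ℕ) ≠ (l : ℕ) := fun h => hne (Fin.ext h)
      simp [hP, h2]
  · intro k' _ hne
    apply Finset.sum_eq_zero
    intro l' _
    simp [hP, hne]

lemma eval_map_conj (p : Polynomial ℂ) (w : ℂ) :
    (p.map (starRingEnd ℂ)).eval w = starRingEnd ℂ (p.eval (starRingEnd ℂ w)) := by
  rw [Polynomial.eval_map]
  nth_rewrite 1 [← Complex.conj_conj w]
  rw [Polynomial.eval₂_hom]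

theorem statement2 {d : ℕ} (hd : 1 ≤ d) (B : HarmonicBasis d)
    (σ : (k : ℕ) → Fin (B.a k) → Measure ℝ)
    (hpos : ∀ k l, (σ k l) (Set.Iio 0) = 0)
    (hmom : ∀ k l (m : ℕ), Integrable (fun r => r ^ m) (σ k l))
    (T : MvPolynomial (Fin d) ℂ → ℂ)
    (hdef : ∀ (f : MvPolynomial (Fin d) ℂ) (K : ℕ) (p : (k : ℕ) → Fin (B.a k) → Polynomial ℂ),
      B.GaussDecomp f K p →
      T f = ∑ k ∈ Finset.range (K + 1), ∑ l, ∫ r, (p k l).eval ((r : ℂ) ^ 2) ∂(σ k l)) :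
    B.PPD T := by
  intro k l p
  have key := comp_int_aux B σ T hdef k l
  have hreal : ∀ r : ℝ, starRingEnd ℂ ((r : ℂ) ^ 2) = (r : ℂ) ^ 2 := by
    intro r; simp
  constructor
  · rw [key]
    have : (fun r : ℝ => (Polynomial.map (starRingEnd ℂ) p * p).eval ((r : ℂ) ^ 2))
        = fun r : ℝ => ((Complex.normSq (p.eval ((r : ℂ) ^ 2)) : ℝ) : ℂ) := by
      funext r
      rw [Polynomial.eval_mul, eval_map_conj, hreal, mul_comm, Complex.mul_conj]
    rw [this]
    have h1 : (∫ r : ℝ, ((Complex.normSq (p.eval ((r : ℂ) ^ 2)) : ℝ) : ℂ) ∂(σ k l))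
        = ((∫ r : ℝ, Complex.normSq (p.eval ((r : ℂ) ^ 2)) ∂(σ k l) : ℝ) : ℂ) :=
      integral_ofReal
    rw [h1, Complex.zero_le_real]
    exact MeasureTheory.integral_nonneg fun r => Complex.normSq_nonneg _
  · rw [key]
    have : (fun r : ℝ => (Polynomial.X * (Polynomial.map (starRingEnd ℂ) p * p)).eval ((r : ℂ) ^ 2))
        = fun r : ℝ => ((r ^ 2 * Complex.normSq (p.eval ((r : ℂ) ^ 2)) : ℝ) : ℂ) := by
      funext r
      rw [Polynomial.eval_mul, Polynomial.eval_X, Polynomial.eval_mul, eval_map_conj, hreal,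
        mul_comm ((starRingEnd ℂ) _), Complex.mul_conj]
      push_cast
      ring
    rw [this]
    have h1 : (∫ r : ℝ, ((r ^ 2 * Complex.normSq (p.eval ((r : ℂ) ^ 2)) : ℝ) : ℂ) ∂(σ k l))
        = ((∫ r : ℝ, r ^ 2 * Complex.normSq (p.eval ((r : ℂ) ^ 2)) ∂(σ k l) : ℝ) : ℂ) :=
      integral_ofReal
    rw [h1, Complex.zero_le_real]
    exact MeasureTheory.integral_nonneg fun r =>
      mul_nonneg (sq_nonneg r) (Complex.normSq_nonneg _)
end
end

section
/- Let μ be a pseudo-positive moment measure on ℝ^d. Then for each k ∈ ℕ₀ and l = 1,…,a_k there exists a unique non-negative moment measure μ_{k,l} on [0,∞) such that ∫_0^∞ h(t) dμ_{k,l}(t) = ∫_{ℝ^d} h(|x|) Y_{k,l}(x) dμ(x) holds for all polynomially bounded continuous functions h on [0,∞). Moreover, for every f ∈ C^×(ℝ^d) ∩ C_pol(ℝ^d) one has ∫_{ℝ^d} f dμ = Σ_{k=0}^∞ Σ_{l=1}^{a_k} ∫_0^∞ f_{k,l}(r) r^{-k} dμ_{k,l}(r), where f_{k,l} are the Laplace–Fourier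 coefficients of f (the sum being finite). -/
/-!
Split `μ = μ⁺ - μ⁻` (Jordan) and `Y = Y⁺ - Y⁻`. The positive measures `P = Y⁺μ⁺ + Y⁻μ⁻` and
`N = Y⁻μ⁺ + Y⁺μ⁻` satisfy `Y μ = P - N`, so their images `P̃, Ñ` under `x ↦ ‖x‖` satisfy
`∫ h dP̃ - ∫ h dÑ = ∫ h(‖x‖) Y(x) dμ` for polynomially bounded `h` (the moment condition makes
everything integrable). Pseudo-positivity says that this is `≥ 0` for `0 ≤ h ∈ C_c`, hence
`Ñ ≤ P̃` by inner regularity, and `μ_{k,l} := P̃ - Ñ` works. Finite measures on `ℝ` are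
determined by their integrals against `C_c` functions, which gives uniqueness; the expansion
formula then follows by linearity.
-/

open MeasureTheory MvPolynomial Metric
open scoped ComplexOrder ENNReal

noncomputable section

/-- A polynomially bounded real function. -/
def PolyBnd (h : ℝ → ℝ) : Prop := ∃ (C : ℝ) (N : ℕ), ∀ t : ℝ, |h t| ≤ C * (1 + |t|) ^ N

/-- A polynomially bounded complex function. -/
def PolyBndC (g : ℝ → ℂ) : Prop := ∃ (C : ℝ) (N : ℕ), ∀ t : ℝ, ‖g t‖ ≤ C * (1 + |t|) ^ N

namespace MeasureTheory.Measure

variable {X : Type*} [TopologicalSpace X] [MeasurableSpace X] [BorelSpace X]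
  [LocallyCompactSpace X] [RegularSpace X]

lemma le_of_forall_integral_le_of_hasCompactSupport (μ ν : Measure X)
    [IsFiniteMeasureOnCompacts μ] [InnerRegular μ]
    [IsFiniteMeasureOnCompacts ν] [InnerRegularCompactLTTop ν]
    (h : ∀ f : X → ℝ, Continuous f → HasCompactSupport f → 0 ≤ f → ∫ x, f x ∂μ ≤ ∫ x, f x ∂ν) :
    μ ≤ ν := by
  refine Measure.le_iff.2 fun s hs => ?_
  rw [hs.measure_eq_iSup_isCompact μ]
  refine iSup₂_le fun K hKs => iSup_le fun hK => ?_
  calc μ K ≤ ν K := by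
        rw [hK.measure_eq_biInf_integral_hasCompactSupport μ,
          hK.measure_eq_biInf_integral_hasCompactSupport ν]
        refine iInf_mono fun f => iInf_mono fun hf => iInf_mono fun hfc =>
          iInf_mono fun _ => iInf_mono fun hf0 => ENNReal.ofReal_le_ofReal (h f hf hfc hf0)
    _ ≤ ν s := measure_mono hKs

end MeasureTheory.Measure

namespace MeasureTheory

variable {α : Type*} [MeasurableSpace α] {G : Type*} [NormedAddCommGroup G] [NormedSpace ℝ G]
  {m : Measure α} {w : α → ℝ} {f : α → G}

lemma Integrable.toNNReal_smul (hw : Measurable w) (hf : AEStronglyMeasurable f m)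
    (hwf : Integrable (fun x => w x • f x) m) :
    Integrable (fun x => ((w x).toNNReal : ℝ) • f x) m := by
  refine hwf.mono ((hw.real_toNNReal.coe_nnreal_real.aestronglyMeasurable).smul hf)
    (Filter.Eventually.of_forall fun x => ?_)
  rw [norm_smul, norm_smul]
  gcongr
  simp [abs_of_nonneg, le_abs_self]

lemma integrable_withDensity_ofReal (hw : Measurable w) (hf : AEStronglyMeasurable f m)
    (hwf : Integrable (fun x => w x • f x) m) :
    Integrable f (m.withDensity fun x => ENNReal.ofReal (w x)) :=
  (integrable_withDensity_iff_integrable_smul hw.real_toNNReal).2 (hwf.toNNReal_smul hw hf)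

lemma integrable_withDensity_ofReal_neg (hw : Measurable w) (hf : AEStronglyMeasurable f m)
    (hwf : Integrable (fun x => w x • f x) m) :
    Integrable f (m.withDensity fun x => ENNReal.ofReal (-w x)) :=
  integrable_withDensity_ofReal hw.neg hf (by simpa only [neg_smul] using hwf.fun_neg)

lemma integral_withDensity_ofReal (hw : Measurable w) :
    ∫ x, f x ∂(m.withDensity fun x => ENNReal.ofReal (w x))
      = ∫ x, ((w x).toNNReal : ℝ) • f x ∂m :=
  integral_withDensity_eq_integral_smul hw.real_toNNReal f

lemma integral_withDensity_ofReal_sub (hw : Measurable w) (hf : AEStronglyMeasurable f m)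
    (hwf : Integrable (fun x => w x • f x) m) :
    ∫ x, f x ∂(m.withDensity fun x => ENNReal.ofReal (w x))
        - ∫ x, f x ∂(m.withDensity fun x => ENNReal.ofReal (-w x))
      = ∫ x, w x • f x ∂m := by
  have hwf' : Integrable (fun x => -w x • f x) m := by simpa only [neg_smul] using hwf.fun_neg
  rw [integral_withDensity_ofReal hw, integral_withDensity_ofReal (w := fun x => -w x) hw.neg,
    ← integral_sub (hwf.toNNReal_smul hw hf) (hwf'.toNNReal_smul (w := fun x => -w x) hw.neg hf)]
  simp only [← sub_smul, Real.coe_toNNReal', max_zero_sub_max_neg_zero_eq_self]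

end MeasureTheory

namespace MeasureTheory.SignedMeasure

section

variable {α : Type*} [MeasurableSpace α] {G : Type*} [NormedAddCommGroup G] [NormedSpace ℝ G]
  (μ : SignedMeasure α) {w : α → ℝ} {f : α → G}

lemma posPart_le_totalVariation : μ.toJordanDecomposition.posPart ≤ μ.totalVariation :=
  Measure.le_add_right le_rfl

lemma negPart_le_totalVariation : μ.toJordanDecomposition.negPart ≤ μ.totalVariation :=
  Measure.le_add_left le_rfl

lemma sInt_finset_sum {ι : Type*} (s : Finset ι) {F : ι → α → G}
    (hF : ∀ i ∈ s, Integrable (F i) μ.totalVariation) :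
    sInt μ (fun x => ∑ i ∈ s, F i x) = ∑ i ∈ s, sInt μ (F i) := by
  simp only [sInt]
  rw [integral_finsetSum s fun i hi => (hF i hi).mono_measure μ.posPart_le_totalVariation,
    integral_finsetSum s fun i hi => (hF i hi).mono_measure μ.negPart_le_totalVariation,
    Finset.sum_sub_distrib]

/-- A positive measure `P` with `w • μ = P - weightedPosPart μ (-w)`. -/
def weightedPosPart (w : α → ℝ) : Measure α :=
  μ.toJordanDecomposition.posPart.withDensity (fun x => ENNReal.ofReal (w x)) +
    μ.toJordanDecomposition.negPart.withDensity (fun x => ENNReal.ofReal (-w x))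

variable {μ}

lemma integrable_weightedPosPart (hw : Measurable w) (hf : AEStronglyMeasurable f μ.totalVariation)
    (hwf : Integrable (fun x => w x • f x) μ.totalVariation) :
    Integrable f (μ.weightedPosPart w) :=
  (integrable_withDensity_ofReal hw (hf.mono_measure μ.posPart_le_totalVariation)
      (hwf.mono_measure μ.posPart_le_totalVariation)).add_measure
    (integrable_withDensity_ofReal_neg hw (hf.mono_measure μ.negPart_le_totalVariation)
      (hwf.mono_measure μ.negPart_le_totalVariation))

lemma isFiniteMeasure_weightedPosPart (hw : Measurable w) (hwi : Integrable w μ.totalVariation) :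
    IsFiniteMeasure (μ.weightedPosPart w) :=
  (integrable_const_iff_isFiniteMeasure one_ne_zero).1 <|
    integrable_weightedPosPart hw aestronglyMeasurable_const (f := fun _ => (1 : ℝ))
      (by simpa using hwi)

lemma sInt_smul_eq_integral_weightedPosPart_sub (hw : Measurable w)
    (hf : AEStronglyMeasurable f μ.totalVariation)
    (hwf : Integrable (fun x => w x • f x) μ.totalVariation) :
    sInt μ (fun x => w x • f x)
      = ∫ x, f x ∂μ.weightedPosPart w - ∫ x, f x ∂μ.weightedPosPart (fun x => -w x) := by
  have key : ∀ ρ ≤ μ.totalVariation,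
      Integrable f (ρ.withDensity fun x => ENNReal.ofReal (w x)) ∧
      Integrable f (ρ.withDensity fun x => ENNReal.ofReal (-w x)) ∧
      ∫ x, f x ∂(ρ.withDensity fun x => ENNReal.ofReal (w x))
        - ∫ x, f x ∂(ρ.withDensity fun x => ENNReal.ofReal (-w x)) = ∫ x, w x • f x ∂ρ :=
    fun ρ hρ => ⟨integrable_withDensity_ofReal hw (hf.mono_measure hρ) (hwf.mono_measure hρ),
      integrable_withDensity_ofReal_neg hw (hf.mono_measure hρ) (hwf.mono_measure hρ),
      integral_withDensity_ofReal_sub hw (hf.mono_measure hρ) (hwf.mono_measure hρ)⟩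
  obtain ⟨p₁, p₂, hp⟩ := key _ μ.posPart_le_totalVariation
  obtain ⟨n₁, n₂, hn⟩ := key _ μ.negPart_le_totalVariation
  simp only [weightedPosPart, neg_neg]
  rw [integral_add_measure p₁ n₂, integral_add_measure p₂ n₁, sInt, ← hp, ← hn]
  abel

end

section

variable {V : Type*} [NormedAddCommGroup V] [MeasurableSpace V]
  {G : Type*} [NormedAddCommGroup G] [NormedSpace ℝ G]
  {μ : SignedMeasure V} {w : V → ℝ} {g : ℝ → G}

def radialPart (μ : SignedMeasure V) (w : V → ℝ) : Measure ℝ :=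
  (μ.weightedPosPart w).map (‖·‖)

lemma isFiniteMeasure_radialPart (hw : Measurable w) (hwi : Integrable w μ.totalVariation) :
    IsFiniteMeasure (μ.radialPart w) := by
  have := isFiniteMeasure_weightedPosPart hw hwi
  rw [radialPart]
  infer_instance

variable [OpensMeasurableSpace V]

lemma radialPart_Iio_zero (μ : SignedMeasure V) (w : V → ℝ) : μ.radialPart w (Set.Iio 0) = 0 := by
  have hempty : (‖·‖) ⁻¹' Set.Iio (0 : ℝ) = (∅ : Set V) :=
    Set.eq_empty_of_forall_notMem fun x hx => (norm_nonneg x).not_gt hx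
  rw [radialPart, Measure.map_apply measurable_norm measurableSet_Iio, hempty, measure_empty]

lemma integrable_radialPart (hw : Measurable w) (hg : Continuous g)
    (hwg : Integrable (fun x => w x • g ‖x‖) μ.totalVariation) :
    Integrable g (μ.radialPart w) :=
  (integrable_map_measure hg.aestronglyMeasurable measurable_norm.aemeasurable).2 <|
    integrable_weightedPosPart hw
      (hg.stronglyMeasurable.comp_measurable measurable_norm).aestronglyMeasurable hwg

lemma sInt_smul_comp_norm (hw : Measurable w) (hg : Continuous g)
    (hwg : Integrable (fun x => w x • g ‖x‖) μ.totalVariation) :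
    sInt μ (fun x => w x • g ‖x‖)
      = ∫ t, g t ∂μ.radialPart w - ∫ t, g t ∂μ.radialPart (fun x => -w x) := by
  rw [radialPart, radialPart,
    integral_map measurable_norm.aemeasurable hg.aestronglyMeasurable,
    integral_map measurable_norm.aemeasurable hg.aestronglyMeasurable]
  exact sInt_smul_eq_integral_weightedPosPart_sub hw
    (hg.stronglyMeasurable.comp_measurable measurable_norm).aestronglyMeasurable hwg

end

end MeasureTheory.SignedMeasure

open SignedMeasure

lemma evalC_normSqP {d : ℕ} (x : E d) : evalC (normSqP d) x = ((‖x‖ ^ 2 : ℝ) : ℂ) := by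
  rw [EuclideanSpace.norm_eq, Real.sq_sqrt (by positivity), evalC, normSqP]
  simp

namespace HarmonicBasis

variable {d : ℕ} (B : HarmonicBasis d)

lemma continuous_Yf (k : ℕ) (l : Fin (B.a k)) : Continuous (B.Yf k l) :=
  (B.Y k l).continuous_eval.comp
    (continuous_pi fun i => (EuclideanSpace.proj (𝕜 := ℝ) i).continuous)

lemma evalC_YC (k : ℕ) (l : Fin (B.a k)) (x : E d) : evalC (B.YC k l) x = (B.Yf k l x : ℂ) := by
  rw [evalC, YC, eval_map, Yf]
  exact (eval₂_comp_left Complex.ofRealHom (RingHom.id ℝ) (fun i => x i) (B.Y k l)).symm ▸ rfl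

variable {μ : SignedMeasure (E d)} {G : Type*} [NormedAddCommGroup G] [NormedSpace ℝ G]

lemma integrable_of_norm_le_mul_abs_Yf (hμ : IsMomentMeasure μ) (k : ℕ) (l : Fin (B.a k))
    {F : Type*} [NormedAddCommGroup F] {f : E d → F} (hf : AEStronglyMeasurable f μ.totalVariation)
    {C : ℝ} {N : ℕ} (hb : ∀ x, ‖f x‖ ≤ C * (1 + ‖x‖) ^ N * |B.Yf k l x|) :
    Integrable f μ.totalVariation := by
  have hQ : ∀ x, ‖evalC ((2 * (1 + normSqP d)) ^ N * B.YC k l) x‖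
      = (2 * (1 + ‖x‖ ^ 2)) ^ N * |B.Yf k l x| := fun x => by
    have : evalC ((2 * (1 + normSqP d)) ^ N * B.YC k l) x
        = (2 * (1 + evalC (normSqP d) x)) ^ N * evalC (B.YC k l) x := by simp [evalC]
    rw [this, evalC_normSqP, B.evalC_YC, ← Complex.ofReal_one, ← Complex.ofReal_ofNat,
      ← Complex.ofReal_add, ← Complex.ofReal_mul, ← Complex.ofReal_pow, ← Complex.ofReal_mul,
      Complex.norm_real, Real.norm_eq_abs, abs_mul, abs_of_nonneg (by positivity)]
  refine ((hμ ((2 * (1 + normSqP d)) ^ N * B.YC k l)).norm.const_mul |C|).mono' hf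
    (Filter.Eventually.of_forall fun x => ?_)
  rw [hQ]
  calc ‖f x‖ ≤ C * (1 + ‖x‖) ^ N * |B.Yf k l x| := hb x
    _ ≤ |C| * ((2 * (1 + ‖x‖ ^ 2)) ^ N * |B.Yf k l x|) := by
        rw [← mul_assoc]
        gcongr
        · exact le_abs_self C
        · nlinarith [sq_nonneg (‖x‖ - 1)]

lemma integrable_Yf_smul_comp_norm (hμ : IsMomentMeasure μ) (k : ℕ) (l : Fin (B.a k))
    {g : ℝ → G} (hg : Continuous g) {C : ℝ} {N : ℕ} (hb : ∀ t, ‖g t‖ ≤ C * (1 + |t|) ^ N) :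
    Integrable (fun x => B.Yf k l x • g ‖x‖) μ.totalVariation := by
  refine B.integrable_of_norm_le_mul_abs_Yf hμ k l
    ((B.continuous_Yf k l).smul (hg.comp continuous_norm)).aestronglyMeasurable
    (C := C) (N := N) fun x => ?_
  rw [norm_smul, Real.norm_eq_abs, mul_comm]
  gcongr
  simpa using hb ‖x‖

lemma integrable_Yf (hμ : IsMomentMeasure μ) (k : ℕ) (l : Fin (B.a k)) :
    Integrable (B.Yf k l) μ.totalVariation :=
  B.integrable_of_norm_le_mul_abs_Yf hμ k l (B.continuous_Yf k l).aestronglyMeasurable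
    (C := 1) (N := 0) fun x => by simp

lemma radialPart_neg_Yf_le (hμ : IsMomentMeasure μ) (hpp : B.PseudoPositive μ)
    (k : ℕ) (l : Fin (B.a k)) :
    μ.radialPart (fun x => -B.Yf k l x) ≤ μ.radialPart (B.Yf k l) := by
  have hY := (B.continuous_Yf k l).measurable
  have := isFiniteMeasure_radialPart hY (B.integrable_Yf hμ k l)
  have := isFiniteMeasure_radialPart hY.neg (B.integrable_Yf hμ k l).neg
  refine Measure.le_of_forall_integral_le_of_hasCompactSupport _ _ fun h hc hcs h0 => ?_
  obtain ⟨M, hM⟩ := hcs.exists_bound_of_continuous hc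
  have hYh := B.integrable_Yf_smul_comp_norm hμ k l hc (C := M) (N := 0) (by simpa using hM)
  have hpos : 0 ≤ sInt μ (fun x => B.Yf k l x • h ‖x‖) := by
    simpa only [smul_eq_mul, mul_comm] using hpp k l h hc hcs h0
  linarith [sInt_smul_comp_norm hY hc hYh]

variable (μ) in
def componentMeasure (k : ℕ) (l : Fin (B.a k)) : Measure ℝ :=
  μ.radialPart (B.Yf k l) - μ.radialPart (fun x => -B.Yf k l x)

lemma componentMeasure_Iio_zero (k : ℕ) (l : Fin (B.a k)) :
    B.componentMeasure μ k l (Set.Iio 0) = 0 :=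
  Measure.absolutelyContinuous_of_le Measure.sub_le (radialPart_Iio_zero _ _)

lemma integrable_componentMeasure (hμ : IsMomentMeasure μ) (k : ℕ) (l : Fin (B.a k))
    {g : ℝ → G} (hg : Continuous g) {C : ℝ} {N : ℕ} (hb : ∀ t, ‖g t‖ ≤ C * (1 + |t|) ^ N) :
    Integrable g (B.componentMeasure μ k l) :=
  (integrable_radialPart (B.continuous_Yf k l).measurable hg
    (B.integrable_Yf_smul_comp_norm hμ k l hg hb)).mono_measure Measure.sub_le

lemma integral_componentMeasure (hμ : IsMomentMeasure μ) (hpp : B.PseudoPositive μ)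
    (k : ℕ) (l : Fin (B.a k)) {g : ℝ → G} (hg : Continuous g)
    {C : ℝ} {N : ℕ} (hb : ∀ t, ‖g t‖ ≤ C * (1 + |t|) ^ N) :
    ∫ t, g t ∂B.componentMeasure μ k l = sInt μ (fun x => B.Yf k l x • g ‖x‖) := by
  have hY := (B.continuous_Yf k l).measurable
  have hYg := B.integrable_Yf_smul_comp_norm hμ k l hg hb
  have := isFiniteMeasure_radialPart hY.neg (B.integrable_Yf hμ k l).neg
  have hsplit : μ.radialPart (B.Yf k l)
      = B.componentMeasure μ k l + μ.radialPart (fun x => -B.Yf k l x) :=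
    (Measure.sub_add_cancel_of_le (B.radialPart_neg_Yf_le hμ hpp k l)).symm
  have hN : Integrable g (μ.radialPart fun x => -B.Yf k l x) :=
    integrable_radialPart hY.neg hg (by simpa only [neg_smul] using hYg.fun_neg)
  rw [sInt_smul_comp_norm hY hg hYg, hsplit,
    integral_add_measure (B.integrable_componentMeasure hμ k l hg hb) hN, add_sub_cancel_right]

lemma eq_componentMeasure (hμ : IsMomentMeasure μ) (hpp : B.PseudoPositive μ)
    (k : ℕ) (l : Fin (B.a k)) (ν : Measure ℝ) [IsLocallyFiniteMeasure ν]
    (hν : ∀ h : ℝ → ℝ, Continuous h → HasCompactSupport h →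
      ∫ t, h t ∂ν = sInt μ (fun x => B.Yf k l x • h ‖x‖)) :
    ν = B.componentMeasure μ k l := by
  have := isFiniteMeasure_radialPart (B.continuous_Yf k l).measurable (B.integrable_Yf hμ k l)
  have : IsFiniteMeasure (B.componentMeasure μ k l) := isFiniteMeasure_of_le _ Measure.sub_le
  have heq : ∀ h : ℝ → ℝ, Continuous h → HasCompactSupport h →
      ∫ t, h t ∂ν = ∫ t, h t ∂B.componentMeasure μ k l := fun h hc hcs => by
    obtain ⟨M, hM⟩ := hcs.exists_bound_of_continuous hc
    rw [hν h hc hcs,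
      B.integral_componentMeasure hμ hpp k l hc (C := M) (N := 0) (by simpa using hM)]
  exact le_antisymm
    (Measure.le_of_forall_integral_le_of_hasCompactSupport _ _ fun h hc hcs _ => (heq h hc hcs).le)
    (Measure.le_of_forall_integral_le_of_hasCompactSupport _ _ fun h hc hcs _ => (heq h hc hcs).ge)

lemma eq_componentMeasure_of_moments (hμ : IsMomentMeasure μ) (hpp : B.PseudoPositive μ)
    (k : ℕ) (l : Fin (B.a k)) {ν : Measure ℝ} (hmoments : ∀ m : ℕ, Integrable (fun t => t ^ m) ν)
    (hν : ∀ h : ℝ → ℝ, Continuous h → PolyBnd h →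
      ∫ t, h t ∂ν = sInt μ (fun x => h ‖x‖ * B.Yf k l x)) :
    ν = B.componentMeasure μ k l := by
  have : IsFiniteMeasure ν :=
    (integrable_const_iff_isFiniteMeasure one_ne_zero).1 (by simpa using hmoments 0)
  refine B.eq_componentMeasure hμ hpp k l ν fun h hc hcs => ?_
  obtain ⟨M, hM⟩ := hcs.exists_bound_of_continuous hc
  simpa only [smul_eq_mul, mul_comm] using hν h hc ⟨M, 0, by simpa using hM⟩

end HarmonicBasis

theorem statement3_general {d : ℕ} (B : HarmonicBasis d) (μ : SignedMeasure (E d))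
    (hmom : IsMomentMeasure μ) (hpp : B.PseudoPositive μ) :
    (∃! ν : (k : ℕ) → Fin (B.a k) → Measure ℝ,
      ∀ k l, (ν k l) (Set.Iio 0) = 0 ∧ (∀ m : ℕ, Integrable (fun t => t ^ m) (ν k l)) ∧
        ∀ h : ℝ → ℝ, Continuous h → PolyBnd h →
          ∫ t, h t ∂(ν k l) = sInt μ (fun x => h ‖x‖ * B.Yf k l x)) ∧
    ∀ ν : (k : ℕ) → Fin (B.a k) → Measure ℝ,
      (∀ k l, (ν k l) (Set.Iio 0) = 0 ∧ (∀ m : ℕ, Integrable (fun t => t ^ m) (ν k l)) ∧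
        ∀ h : ℝ → ℝ, Continuous h → PolyBnd h →
          ∫ t, h t ∂(ν k l) = sInt μ (fun x => h ‖x‖ * B.Yf k l x)) →
      ∀ (K : ℕ) (g : (k : ℕ) → Fin (B.a k) → ℝ → ℂ),
        (∀ k l, Continuous (g k l)) → (∀ k l, PolyBndC (g k l)) →
        sInt μ (fun x => ∑ k ∈ Finset.range (K + 1), ∑ l, g k l ‖x‖ * (B.Yf k l x : ℂ))
          = ∑ k ∈ Finset.range (K + 1), ∑ l, ∫ r, g k l r ∂(ν k l) := by
  have hunique : ∀ ν : (k : ℕ) → Fin (B.a k) → Measure ℝ,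
      (∀ k l, (ν k l) (Set.Iio 0) = 0 ∧ (∀ m : ℕ, Integrable (fun t => t ^ m) (ν k l)) ∧
        ∀ h : ℝ → ℝ, Continuous h → PolyBnd h →
          ∫ t, h t ∂(ν k l) = sInt μ (fun x => h ‖x‖ * B.Yf k l x)) →
      ν = B.componentMeasure μ := fun ν hν => funext₂ fun k l =>
    B.eq_componentMeasure_of_moments hmom hpp k l (hν k l).2.1 (hν k l).2.2
  refine ⟨⟨B.componentMeasure μ, fun k l => ⟨B.componentMeasure_Iio_zero k l, fun m => ?_,
    fun h hc ⟨C, N, hb⟩ => ?_⟩, hunique⟩, fun ν hν K g hgc hgb => ?_⟩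
  · exact B.integrable_componentMeasure hmom k l (continuous_pow m) (C := 1) (N := m) fun t => by
      simpa using pow_le_pow_left₀ (abs_nonneg t) (le_add_of_nonneg_left zero_le_one) m
  · simpa only [smul_eq_mul, mul_comm] using
      B.integral_componentMeasure hmom hpp k l hc (C := C) (N := N) hb
  obtain rfl := hunique ν hν
  have hcomplex : ∀ k l x, g k l ‖x‖ * (B.Yf k l x : ℂ) = B.Yf k l x • g k l ‖x‖ :=
    fun _ _ _ => by rw [Complex.real_smul, mul_comm]
  have hint : ∀ k l, Integrable (fun x => B.Yf k l x • g k l ‖x‖) μ.totalVariation := fun k l => by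
    obtain ⟨C, N, hb⟩ := hgb k l
    exact B.integrable_Yf_smul_comp_norm hmom k l (hgc k l) hb
  simp only [hcomplex]
  rw [sInt_finset_sum _ _ fun k _ => integrable_finsetSum _ fun l _ => hint k l]
  refine Finset.sum_congr rfl fun k _ => ?_
  rw [sInt_finset_sum _ _ fun l _ => hint k l]
  refine Finset.sum_congr rfl fun l _ => ?_
  obtain ⟨C, N, hb⟩ := hgb k l
  exact (B.integral_componentMeasure hmom hpp k l (hgc k l) hb).symm

theorem statement3 {d : ℕ} (hd : 1 ≤ d) (B : HarmonicBasis d) (μ : SignedMeasure (E d))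
    (hmom : IsMomentMeasure μ) (hpp : B.PseudoPositive μ) :
    (∃! ν : (k : ℕ) → Fin (B.a k) → Measure ℝ,
      ∀ k l, (ν k l) (Set.Iio 0) = 0 ∧ (∀ m : ℕ, Integrable (fun t => t ^ m) (ν k l)) ∧
        ∀ h : ℝ → ℝ, Continuous h → PolyBnd h →
          ∫ t, h t ∂(ν k l) = sInt μ (fun x => h ‖x‖ * B.Yf k l x)) ∧
    ∀ ν : (k : ℕ) → Fin (B.a k) → Measure ℝ,
      (∀ k l, (ν k l) (Set.Iio 0) = 0 ∧ (∀ m : ℕ, Integrable (fun t => t ^ m) (ν k l)) ∧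
        ∀ h : ℝ → ℝ, Continuous h → PolyBnd h →
          ∫ t, h t ∂(ν k l) = sInt μ (fun x => h ‖x‖ * B.Yf k l x)) →
      ∀ (K : ℕ) (g : (k : ℕ) → Fin (B.a k) → ℝ → ℂ),
        (∀ k l, Continuous (g k l)) → (∀ k l, PolyBndC (g k l)) →
        sInt μ (fun x => ∑ k ∈ Finset.range (K + 1), ∑ l, g k l ‖x‖ * (B.Yf k l x : ℂ))
          = ∑ k ∈ Finset.range (K + 1), ∑ l, ∫ r, g k l r ∂(ν k l) :=
  statement3_general B μ hmom hpp
end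
end

section
/- Let 0 < a < b and let σ be a non-zero non-negative finite measure on the interval [a,b]. Then the functional T : ℂ[x] → ℂ defined by T(f) = ∫_a^b f(x) dσ(x) − ∫_a^b f(−x) dσ(x) is pseudo-positive definite (for d = 1) but not positive definite, i.e. there exists a polynomial p ∈ ℂ[x] with T(p*·p) < 0. -/
/-!
On a polynomial `r(x²)·xᵏ` the functional `T` vanishes when `k = 0`, the integrand being even,
and equals `2 ∫ r(x²) x dσ` when `k = 1`; this is nonnegative as soon as `r ≥ 0` on `[0, ∞)`,
because `σ` lives on `[a, b] ⊂ (0, ∞)`. Positive definiteness fails for `p = x - 1`: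
`T(p*·p) = ∫ ((x - 1)² - (x + 1)²) dσ = -4 ∫ x dσ < 0`.
-/

open MeasureTheory Polynomial
open scoped ComplexOrder

noncomputable section

namespace Polynomial

lemma eval_ofReal_map_conj (p : ℂ[X]) (x : ℝ) :
    (p.map (starRingEnd ℂ)).eval (x : ℂ) = starRingEnd ℂ (p.eval (x : ℂ)) := by
  simpa [eval_map] using eval₂_at_apply (p := p) (starRingEnd ℂ) (x : ℂ)

lemma eval_ofReal_map_conj_mul_self_nonneg (p : ℂ[X]) (x : ℝ) :
    0 ≤ (p.map (starRingEnd ℂ) * p).eval (x : ℂ) := by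
  rw [eval_mul, eval_ofReal_map_conj]
  exact star_mul_self_nonneg _

end Polynomial

theorem Continuous.integrable_of_ae_mem_isCompact {X E : Type*} [TopologicalSpace X] [T2Space X]
    [MeasurableSpace X] [OpensMeasurableSpace X] [NormedAddCommGroup E] {μ : Measure X}
    [IsFiniteMeasureOnCompacts μ] {K : Set X} {g : X → E} (hg : Continuous g) (hK : IsCompact K)
    (hμK : ∀ᵐ x ∂μ, x ∈ K) : Integrable g μ := by
  rw [← Measure.restrict_eq_self_of_ae_mem hμK]
  exact hg.continuousOn.integrableOn_compact hK

def reflectionFunctional (σ : Measure ℝ) (f : ℂ[X]) : ℂ :=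
  (∫ x : ℝ, f.eval (x : ℂ) ∂σ) - ∫ x : ℝ, f.eval (-(x : ℂ)) ∂σ

namespace reflectionFunctional

variable {σ : Measure ℝ}

lemma eq_zero_of_even {f : ℂ[X]} (hf : ∀ x : ℝ, f.eval (-(x : ℂ)) = f.eval (x : ℂ)) :
    reflectionFunctional σ f = 0 := by
  simp_rw [reflectionFunctional, hf, sub_self]

lemma nonneg_of_odd {f : ℂ[X]} (hf : ∀ x : ℝ, f.eval (-(x : ℂ)) = -f.eval (x : ℂ))
    (hpos : ∀ᵐ x : ℝ ∂σ, 0 ≤ f.eval (x : ℂ)) : 0 ≤ reflectionFunctional σ f := by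
  simp_rw [reflectionFunctional, hf, integral_neg, sub_neg_eq_add]
  exact add_nonneg (integral_nonneg_of_ae hpos) (integral_nonneg_of_ae hpos)

lemma comp_X_sq_mul_X_pow_nonneg (hσ : ∀ᵐ x ∂σ, 0 ≤ x) {r : ℂ[X]}
    (hr : ∀ t : ℝ, 0 ≤ t → 0 ≤ r.eval (t : ℂ)) (k : Fin 2) :
    0 ≤ reflectionFunctional σ (r.comp (X ^ 2) * X ^ (k : ℕ)) := by
  fin_cases k
  · exact (eq_zero_of_even fun x => by simp).ge
  · refine nonneg_of_odd (fun x => by simp) ?_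
    filter_upwards [hσ] with x hx
    simp only [eval_mul, eval_comp, eval_pow, eval_X, pow_one, ← Complex.ofReal_pow]
    exact mul_nonneg (hr _ (sq_nonneg x)) (Complex.zero_le_real.2 hx)

lemma X_sub_one_mul_self_neg [IsFiniteMeasure σ] {a b : ℝ} (ha : 0 < a)
    (hσab : ∀ᵐ x ∂σ, x ∈ Set.Icc a b) (hσ : σ ≠ 0) :
    reflectionFunctional σ ((X - 1) * (X - 1)) < 0 := by
  have hint {E : Type} [NormedAddCommGroup E] {g : ℝ → E} (hg : Continuous g) :
      Integrable g σ :=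
    hg.integrable_of_ae_mem_isCompact isCompact_Icc hσab
  have hmean : 0 < ∫ x, x ∂σ := by
    have : NeZero σ := ⟨hσ⟩
    calc 0 < σ.real Set.univ * a := mul_pos measureReal_univ_pos ha
      _ = ∫ _, a ∂σ := by rw [integral_const, smul_eq_mul]
      _ ≤ ∫ x, x ∂σ :=
        integral_mono_ae (integrable_const a) (hint continuous_id) (hσab.mono fun x hx => hx.1)
  have hvalue : reflectionFunctional σ ((X - 1) * (X - 1)) = ((-4 * ∫ x, x ∂σ : ℝ) : ℂ) := by
    set p : ℂ[X] := (X - 1) * (X - 1)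
    have hp : Integrable (fun x : ℝ => p.eval (x : ℂ)) σ :=
      hint (p.continuous.comp Complex.continuous_ofReal)
    have hp_neg : Integrable (fun x : ℝ => p.eval (-(x : ℂ))) σ :=
      hint (p.continuous.comp Complex.continuous_ofReal.neg)
    rw [reflectionFunctional, ← integral_sub hp hp_neg,
      ← integral_const_mul, ← integral_complex_ofReal]
    congr 1 with x
    simp only [p, eval_mul, eval_sub, eval_X, eval_one]
    push_cast
    ring
  rw [hvalue, ← Complex.ofReal_zero, Complex.real_lt_real]
  linarith

end reflectionFunctional

theorem statement17_general (a b : ℝ) (ha : 0 < a)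
    (σ : Measure ℝ) [IsFiniteMeasure σ] (hsupp : σ ((Set.Icc a b)ᶜ) = 0) (hσ : σ ≠ 0)
    (T : Polynomial ℂ → ℂ)
    (hT : ∀ f : Polynomial ℂ,
      T f = (∫ x : ℝ, f.eval (x : ℂ) ∂σ) - ∫ x : ℝ, f.eval (-(x : ℂ)) ∂σ) :
    (∀ (k : Fin 2) (p : Polynomial ℂ),
        0 ≤ T ((p.map (starRingEnd ℂ) * p).comp (Polynomial.X ^ 2) * Polynomial.X ^ (k : ℕ)) ∧
        0 ≤ T ((Polynomial.X * (p.map (starRingEnd ℂ) * p)).comp (Polynomial.X ^ 2) *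
              Polynomial.X ^ (k : ℕ))) ∧
    ∃ p : Polynomial ℂ, T (p.map (starRingEnd ℂ) * p) < 0 := by
  obtain rfl : T = reflectionFunctional σ := funext hT
  have hσab : ∀ᵐ x ∂σ, x ∈ Set.Icc a b := ae_iff.2 hsupp
  have hσpos : ∀ᵐ x ∂σ, 0 ≤ x := hσab.mono fun x hx => ha.le.trans hx.1
  refine ⟨fun k p => ⟨?_, ?_⟩, X - 1, ?_⟩
  · exact reflectionFunctional.comp_X_sq_mul_X_pow_nonneg hσpos
      (fun t _ => p.eval_ofReal_map_conj_mul_self_nonneg t) k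
  · refine reflectionFunctional.comp_X_sq_mul_X_pow_nonneg hσpos (fun t ht => ?_) k
    rw [eval_mul, eval_X]
    exact mul_nonneg (Complex.zero_le_real.2 ht) (p.eval_ofReal_map_conj_mul_self_nonneg t)
  · simpa using reflectionFunctional.X_sub_one_mul_self_neg ha hσab hσ

theorem statement17 (a b : ℝ) (ha : 0 < a) (hab : a < b)
    (σ : Measure ℝ) [IsFiniteMeasure σ] (hsupp : σ ((Set.Icc a b)ᶜ) = 0) (hσ : σ ≠ 0)
    (T : Polynomial ℂ → ℂ)
    (hT : ∀ f : Polynomial ℂ,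
      T f = (∫ x : ℝ, f.eval (x : ℂ) ∂σ) - ∫ x : ℝ, f.eval (-(x : ℂ)) ∂σ) :
    (∀ (k : Fin 2) (p : Polynomial ℂ),
        0 ≤ T ((p.map (starRingEnd ℂ) * p).comp (Polynomial.X ^ 2) * Polynomial.X ^ (k : ℕ)) ∧
        0 ≤ T ((Polynomial.X * (p.map (starRingEnd ℂ) * p)).comp (Polynomial.X ^ 2) *
              Polynomial.X ^ (k : ℕ))) ∧
    ∃ p : Polynomial ℂ, T (p.map (starRingEnd ℂ) * p) < 0 :=
  statement17_general a b ha σ hsupp hσ T hT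
end
end
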